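/- Let G be a strongly connected signed digraph with Laplacian L and mirror Laplacian L̂ = (W·L + Lᵀ·W)/2. Then the null space of L̂ equals the null space of L, i.e., for every x ∈ ℝⁿ, L̂·x = 0 if and only if L·x = 0. -/

import Mathlib

open Matrix BigOperators Filter

/-- In-degree of node `i`: sum of absolute values of the `i`-th row of `A`. -/
noncomputable def inDeg {n : ℕ} (A : Matrix (Fin n) (Fin n) ℝ) (i : Fin n) : ℝ := ∑ j, |A i j|

/-- Laplacian `L = Δ − A` of the signed digraph with adjacency matrix `A`. -/
noncomputable def lapOf {n : ℕ} (A : Matrix (Fin n) (Fin n) ℝ) : Matrix (Fin n) (Fin n) ℝ :=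
  Matrix.diagonal (inDeg A) - A

/-- Laplacian `L̄ = Δ − Ā` of the induced unsigned digraph. -/
noncomputable def lapBar {n : ℕ} (A : Matrix (Fin n) (Fin n) ℝ) : Matrix (Fin n) (Fin n) ℝ :=
  Matrix.diagonal (inDeg A) - Matrix.of (fun i j => |A i j|)

/-- `det(L̄_ii)`: determinant of `L̄` with its `i`-th row and column removed. -/
noncomputable def minorDet {n : ℕ} (A : Matrix (Fin n) (Fin n) ℝ) (i : Fin n) : ℝ :=
  Matrix.det ((lapBar A).submatrix (fun k : {j : Fin n // j ≠ i} => (k : Fin n))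
    (fun k : {j : Fin n // j ≠ i} => (k : Fin n)))

/-- `W = diag(det(L̄_11), …, det(L̄_nn))`. -/
noncomputable def Wmat {n : ℕ} (A : Matrix (Fin n) (Fin n) ℝ) : Matrix (Fin n) (Fin n) ℝ :=
  Matrix.diagonal (minorDet A)

/-- Mirror adjacency matrix `Â = (W·A + Aᵀ·W)/2`. -/
noncomputable def mirrorAdj {n : ℕ} (A : Matrix (Fin n) (Fin n) ℝ) : Matrix (Fin n) (Fin n) ℝ :=
  (1/2 : ℝ) • (Wmat A * A + Aᵀ * Wmat A)

/-- Mirror Laplacian `L̂ = (W·L + Lᵀ·W)/2`. -/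
noncomputable def mirrorLap {n : ℕ} (A : Matrix (Fin n) (Fin n) ℝ) : Matrix (Fin n) (Fin n) ℝ :=
  (1/2 : ℝ) • (Wmat A * lapOf A + (lapOf A)ᵀ * Wmat A)

/-- `(j, i)` is a directed edge when `a_ij ≠ 0`; strong connectivity: a directed
path between every ordered pair of distinct nodes. -/
def StronglyConnected {n : ℕ} (A : Matrix (Fin n) (Fin n) ℝ) : Prop :=
  ∀ i j : Fin n, i ≠ j → Relation.TransGen (fun u v => A v u ≠ 0) i j

/-- `σ` is the diagonal of a gauge transformation: each entry is `±1`. -/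
def IsGauge {n : ℕ} (σ : Fin n → ℝ) : Prop := ∀ i, σ i = 1 ∨ σ i = -1

/-- Structural balance: there is a gauge transformation `D = diag σ` with all entries
of `D·A·D` (entrywise `σ i * A i j * σ j`) nonnegative. -/
def StructBalanced {n : ℕ} (A : Matrix (Fin n) (Fin n) ℝ) : Prop :=
  ∃ σ : Fin n → ℝ, IsGauge σ ∧ ∀ i j, 0 ≤ σ i * A i j * σ j

/-- Improved Laplacian potential function
`Φ_e(x) = Σ_i Σ_j det(L̄_ii)·|a_ij|·(x_i − sgn(a_ij)·x_j)²`. -/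
noncomputable def PhiE {n : ℕ} (A : Matrix (Fin n) (Fin n) ℝ) (x : Fin n → ℝ) : ℝ :=
  ∑ i, ∑ j, minorDet A i * |A i j| * (x i - Real.sign (A i j) * x j) ^ 2

/-!
The weights `w i = det L̄_ii` are positive: every principal minor of the weakly diagonally
dominant matrix `L̄` is nonsingular by a maximum principle along the paths of the strongly
connected graph, and a nonsingular weakly dominant matrix has positive determinant (deform it to
its diagonal). They also form a left null vector of `L̄`, because the columns of `adj L̄` lie in
`ker L̄ = span 1`. With these weights `xᵀ L̂ x = xᵀ W L x = Φ_e(x) / 2`, a weighted sum of squares of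
`x i - sgn(a_ij) x j` over the edges. So `L̂ x = 0` and `L x = 0` both force `Φ_e(x) = 0`, that is
`|a_ij| x i = a_ij x j` for all `i, j`, and this edge condition gives `L x = 0` and `Lᵀ W x = 0`.
-/

open Finset

lemma Real.abs_mul_sign (a : ℝ) : |a| * Real.sign a = a := by
  rcases lt_trichotomy a 0 with h | rfl | h
  · rw [Real.sign_of_neg h, abs_of_neg h]; ring
  · simp
  · rw [Real.sign_of_pos h, abs_of_pos h, mul_one]

lemma Real.sign_mul_self (a : ℝ) : Real.sign a * a = |a| := by
  rcases lt_trichotomy a 0 with h | rfl | h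
  · rw [Real.sign_of_neg h, abs_of_neg h]; ring
  · simp
  · rw [Real.sign_of_pos h, abs_of_pos h, one_mul]

lemma abs_mul_eq_mul_swap {a y z : ℝ} (h : |a| * y = a * z) : |a| * z = a * y := by
  linear_combination (-Real.sign a) * h - z * Real.sign_mul_self a + y * Real.abs_mul_sign a

namespace Matrix

variable {ι : Type*} [Fintype ι] [DecidableEq ι]

lemma diag_pos_of_sum_row_le_diag {B : Matrix ι ι ℝ}
    (hdom : ∀ u, ∑ k ∈ univ.erase u, |B u k| ≤ B u u) (hdet : B.det ≠ 0) (u : ι) : 0 < B u u := by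
  refine ((sum_nonneg fun k _ => abs_nonneg _).trans (hdom u)).lt_of_ne' fun h0 => hdet ?_
  have hrow : ∑ k ∈ univ.erase u, |B u k| = 0 :=
    le_antisymm (h0 ▸ hdom u) (sum_nonneg fun k _ => abs_nonneg _)
  refine det_eq_zero_of_row_eq_zero u fun k => ?_
  obtain rfl | hk := eq_or_ne k u
  · exact h0
  · exact abs_eq_zero.mp ((sum_eq_zero_iff_of_nonneg fun k _ => abs_nonneg _).mp hrow k
      (mem_erase.mpr ⟨hk, mem_univ k⟩))

/-- Along `t ↦ D + t • (B - D)`, `D` the diagonal of `B`, the determinant never vanishes: for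
`t < 1` the matrix is strictly dominant, and at `t = 1` it is `B`. -/
theorem det_pos_of_sum_row_le_diag {B : Matrix ι ι ℝ}
    (hdom : ∀ u, ∑ k ∈ univ.erase u, |B u k| ≤ B u u) (hdet : B.det ≠ 0) : 0 < B.det := by
  have hdiag := diag_pos_of_sum_row_le_diag hdom hdet
  set D : Matrix ι ι ℝ := diagonal fun u => B u u
  set C : ℝ → Matrix ι ι ℝ := fun t => D + t • (B - D)
  have hC_diag : ∀ t u, C t u u = B u u := by simp [C, D]
  have hC_offDiag : ∀ t u k, u ≠ k → C t u k = t * B u k := by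
    intro t u k h; simp [C, D, diagonal_apply_ne _ h]
  have hC_ne : ∀ t ∈ Set.Icc (0 : ℝ) 1, (C t).det ≠ 0 := by
    rintro t ⟨ht0, ht1⟩
    obtain rfl | ht1 := ht1.eq_or_lt
    · simpa [C] using hdet
    refine det_ne_zero_of_sum_row_lt_diag fun u => ?_
    rw [Real.norm_eq_abs, hC_diag, abs_of_pos (hdiag u)]
    calc ∑ k ∈ univ.erase u, ‖C t u k‖ = t * ∑ k ∈ univ.erase u, |B u k| := by
          rw [mul_sum]
          refine sum_congr rfl fun k hk => ?_
          rw [hC_offDiag t u k (ne_of_mem_erase hk).symm, Real.norm_eq_abs, abs_mul,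
            abs_of_nonneg ht0]
      _ < B u u := by nlinarith [hdom u, hdiag u]
  have hcont : ContinuousOn (fun t => (C t).det) (Set.Icc 0 1) :=
    (continuous_const.add (continuous_id.smul continuous_const)).matrix_det.continuousOn
  have hC0 : 0 < (C 0).det := by simpa [C, D] using prod_pos fun u _ => hdiag u
  by_contra hneg
  obtain ⟨t, ht, hzero⟩ := intermediate_value_Icc' zero_le_one hcont
    ⟨by simpa [C] using not_lt.mp hneg, hC0.le⟩
  exact hC_ne t ht hzero

lemma sum_abs_submatrix_erase_le {κ : Type*} [Fintype κ] [DecidableEq κ] {B : Matrix ι ι ℝ}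
    (hB : ∀ u, ∑ k ∈ univ.erase u, |B u k| ≤ B u u) {e : κ → ι} (he : Function.Injective e)
    (u : κ) : ∑ k ∈ univ.erase u, |B.submatrix e e u k| ≤ B.submatrix e e u u := by
  refine le_trans ?_ (hB (e u))
  simp only [submatrix_apply]
  rw [← sum_image (f := fun k => |B (e u) k|) fun a _ b _ h => he h]
  exact sum_le_sum_of_subset_of_nonneg (by simp [subset_iff, he.ne_iff])
    fun _ _ _ => abs_nonneg _

lemma adjugate_apply_self {R : Type*} [CommRing R] {n : ℕ} (M : Matrix (Fin n) (Fin n) R)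
    (i : Fin n) :
    M.adjugate i i = (M.submatrix (fun k : {j // j ≠ i} => k.1) (fun k => k.1)).det := by
  obtain ⟨m, rfl⟩ := Nat.exists_eq_succ_of_ne_zero i.pos.ne'
  rw [adjugate_fin_succ_eq_det_submatrix, Even.neg_one_pow ⟨i, rfl⟩, one_mul,
    ← det_submatrix_equiv_self (finSuccAboveEquiv i), submatrix_submatrix]
  rfl

end Matrix

variable {n : ℕ} (A : Matrix (Fin n) (Fin n) ℝ)

section lapBar

lemma lapBar_mulVec_apply (v : Fin n → ℝ) (i : Fin n) :
    (lapBar A *ᵥ v) i = ∑ j, |A i j| * (v i - v j) := by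
  simp only [lapBar, sub_mulVec, Pi.sub_apply, mulVec_diagonal, inDeg, sum_mul, mul_sub,
    sum_sub_distrib]
  simp [mulVec, dotProduct, mul_comm]

lemma lapBar_mulVec_const (c : ℝ) : lapBar A *ᵥ (fun _ => c) = 0 := by
  funext i; simp [lapBar_mulVec_apply]

lemma lapBar_apply_ne {i j : Fin n} (h : i ≠ j) : lapBar A i j = -|A i j| := by
  simp [lapBar, diagonal_apply_ne _ h]

lemma sum_abs_lapBar_erase (i : Fin n) :
    ∑ j ∈ univ.erase i, |lapBar A i j| = lapBar A i i := by
  rw [sum_congr rfl fun j hj => by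
      rw [lapBar_apply_ne A (ne_of_mem_erase hj).symm, abs_neg, abs_abs],
    sum_erase_eq_sub (mem_univ i)]
  simp [lapBar, inDeg]

lemma eq_of_forall_le_of_lapBar_mulVec_apply_eq_zero {v : Fin n → ℝ} {u j : Fin n}
    (hmax : ∀ k, v k ≤ v u) (hu : (lapBar A *ᵥ v) u = 0) (hj : A u j ≠ 0) : v j = v u := by
  rw [lapBar_mulVec_apply] at hu
  have hterm := (sum_eq_zero_iff_of_nonneg fun k _ =>
    mul_nonneg (abs_nonneg (A u k)) (sub_nonneg.mpr (hmax k))).mp hu j (mem_univ j)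
  linarith [(mul_eq_zero.mp hterm).resolve_left (abs_ne_zero.mpr hj)]

/-- A positive maximum of `z` would spread backwards along a path from `i` to the maximizer,
reaching `z i = 0`. -/
lemma nonpos_of_lapBar_mulVec_apply_eq_zero (hsc : StronglyConnected A) {z : Fin n → ℝ}
    {i : Fin n} (hzi : z i = 0) (hz : ∀ a ≠ i, (lapBar A *ᵥ z) a = 0) (k : Fin n) :
    z k ≤ 0 := by
  obtain ⟨u, -, hu⟩ := exists_max_image univ z ⟨i, mem_univ i⟩
  replace hu : ∀ k, z k ≤ z u := fun k => hu k (mem_univ k)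
  refine (hu k).trans (not_lt.mp fun hpos => ?_)
  have hne : ∀ {a}, z a = z u → a ≠ i := fun h hai => by linarith [hai ▸ h]
  have hpath : ∀ a, Relation.TransGen (fun p q => A q p ≠ 0) a u → z a = z u := by
    intro a h
    induction h using Relation.TransGen.head_induction_on with
    | single h => exact eq_of_forall_le_of_lapBar_mulVec_apply_eq_zero A hu (hz u (hne rfl)) h
    | head h _ ih =>
      exact ih ▸ eq_of_forall_le_of_lapBar_mulVec_apply_eq_zero A (ih ▸ hu) (hz _ (hne ih)) h
  exact hne (hpath i (hsc i u (hne rfl).symm)) rfl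

lemma eq_zero_of_lapBar_mulVec_apply_eq_zero (hsc : StronglyConnected A) {z : Fin n → ℝ}
    {i : Fin n} (hzi : z i = 0) (hz : ∀ a ≠ i, (lapBar A *ᵥ z) a = 0) : z = 0 := by
  funext k
  refine le_antisymm (nonpos_of_lapBar_mulVec_apply_eq_zero A hsc hzi hz k) ?_
  simpa using nonpos_of_lapBar_mulVec_apply_eq_zero A hsc (z := -z) (i := i) (by simp [hzi])
    (fun a ha => by simp [mulVec_neg, hz a ha]) k

lemma eq_of_lapBar_mulVec_eq_zero (hsc : StronglyConnected A) {v : Fin n → ℝ}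
    (hv : lapBar A *ᵥ v = 0) (s t : Fin n) : v s = v t := by
  have := eq_zero_of_lapBar_mulVec_apply_eq_zero A hsc (z := v - fun _ => v t) (i := t)
    (by simp) (fun a _ => by simp [mulVec_sub, hv, lapBar_mulVec_const])
  exact sub_eq_zero.mp (congrFun this s)

lemma det_lapBar_eq_zero (i : Fin n) : (lapBar A).det = 0 :=
  exists_mulVec_eq_zero_iff.mp
    ⟨fun _ => 1, fun h => one_ne_zero (congrFun h i), lapBar_mulVec_const A 1⟩

end lapBar

section minorDet

lemma minorDet_ne_zero (hsc : StronglyConnected A) (i : Fin n) : minorDet A i ≠ 0 := by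
  intro hdet
  obtain ⟨y, hy0, hy⟩ := exists_mulVec_eq_zero_iff.mpr hdet
  set z : Fin n → ℝ := fun j => if h : j = i then 0 else y ⟨j, h⟩
  have hzy : ∀ k : {j // j ≠ i}, z k = y k := fun k => dif_neg k.2
  have hz : z = 0 := by
    refine eq_zero_of_lapBar_mulVec_apply_eq_zero A hsc (i := i) (by simp [z]) fun a ha => ?_
    rw [mulVec, dotProduct, Fintype.sum_eq_add_sum_subtype_ne _ i]
    simp only [hzy, dif_pos, mul_zero, zero_add, z]
    exact congrFun hy ⟨a, ha⟩
  exact hy0 (funext fun k => by simpa [hzy] using congrFun hz k)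

lemma minorDet_pos (hsc : StronglyConnected A) (i : Fin n) : 0 < minorDet A i :=
  det_pos_of_sum_row_le_diag
    (sum_abs_submatrix_erase_le (fun u => (sum_abs_lapBar_erase A u).le) Subtype.val_injective)
    (minorDet_ne_zero A hsc i)

lemma minorDet_vecMul_lapBar (hsc : StronglyConnected A) : minorDet A ᵥ* lapBar A = 0 := by
  funext j
  have hdet := det_lapBar_eq_zero A j
  have hadj : ∀ k, (lapBar A).adjugate j k = minorDet A k := by
    intro k
    have hcol : lapBar A *ᵥ (fun r => (lapBar A).adjugate r k) = 0 := by
      funext r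
      simpa [hdet, mulVec, dotProduct, mul_apply] using
        congrFun (congrFun (mul_adjugate (lapBar A)) r) k
    rw [eq_of_lapBar_mulVec_eq_zero A hsc hcol j k, adjugate_apply_self]
    rfl
  simpa [hdet, vecMul, dotProduct, mul_apply, hadj] using
    congrFun (congrFun (adjugate_mul (lapBar A)) j) j

lemma sum_minorDet_mul_abs (hsc : StronglyConnected A) (j : Fin n) :
    ∑ k, minorDet A k * |A k j| = minorDet A j * inDeg A j := by
  have := congrFun (minorDet_vecMul_lapBar A hsc) j
  simp only [vecMul, dotProduct, lapBar, Matrix.sub_apply, diagonal_apply, mul_sub,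
    sum_sub_distrib, mul_ite, mul_zero, sum_ite_eq', mem_univ, if_true, Pi.zero_apply,
    sub_eq_zero, of_apply] at this
  exact this.symm

end minorDet

section lapOf

lemma lapOf_mulVec_apply (x : Fin n → ℝ) (i : Fin n) :
    (lapOf A *ᵥ x) i = ∑ j, (|A i j| * x i - A i j * x j) := by
  simp only [lapOf, sub_mulVec, Pi.sub_apply, mulVec_diagonal, inDeg, sum_mul, sum_sub_distrib]
  rfl

lemma transpose_lapOf_mulVec_apply (y : Fin n → ℝ) (j : Fin n) :
    ((lapOf A)ᵀ *ᵥ y) j = inDeg A j * y j - ∑ k, A k j * y k := by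
  simp [lapOf, mulVec, dotProduct, diagonal_apply, sub_mul, sum_sub_distrib]

lemma mirrorLap_mulVec (x : Fin n → ℝ) :
    mirrorLap A *ᵥ x =
      (1 / 2 : ℝ) • (Wmat A *ᵥ (lapOf A *ᵥ x) + (lapOf A)ᵀ *ᵥ (Wmat A *ᵥ x)) := by
  rw [mirrorLap, smul_mulVec, add_mulVec, mulVec_mulVec, mulVec_mulVec]

lemma dotProduct_mirrorLap_mulVec (x : Fin n → ℝ) :
    x ⬝ᵥ (mirrorLap A *ᵥ x) = x ⬝ᵥ (Wmat A *ᵥ (lapOf A *ᵥ x)) := by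
  have hsymm : x ⬝ᵥ ((lapOf A)ᵀ *ᵥ (Wmat A *ᵥ x)) = x ⬝ᵥ (Wmat A *ᵥ (lapOf A *ᵥ x)) := by
    rw [dotProduct_mulVec, vecMul_transpose, dotProduct_comm, dotProduct_mulVec x (Wmat A),
      ← mulVec_transpose, Wmat, diagonal_transpose]
  rw [mirrorLap_mulVec, dotProduct_smul, dotProduct_add, hsymm, smul_eq_mul]
  ring

lemma PhiE_eq (hsc : StronglyConnected A) (x : Fin n → ℝ) :
    PhiE A x = 2 * (x ⬝ᵥ (Wmat A *ᵥ (lapOf A *ᵥ x))) := by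
  have hterm : ∀ i j, minorDet A i * |A i j| * (x i - Real.sign (A i j) * x j) ^ 2 =
      2 * (x i * (minorDet A i * (|A i j| * x i - A i j * x j)))
        - minorDet A i * |A i j| * x i ^ 2 + minorDet A i * |A i j| * x j ^ 2 := fun i j => by
    linear_combination (-2 * minorDet A i * x i * x j + minorDet A i * x j ^ 2 * Real.sign (A i j))
      * Real.abs_mul_sign (A i j) + minorDet A i * x j ^ 2 * Real.sign_mul_self (A i j)
  have hbalance : ∑ i, ∑ j, minorDet A i * |A i j| * x j ^ 2 =
      ∑ i, ∑ j, minorDet A i * |A i j| * x i ^ 2 := by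
    rw [sum_comm]
    refine sum_congr rfl fun j _ => ?_
    rw [← sum_mul, sum_minorDet_mul_abs A hsc, inDeg, mul_sum, sum_mul]
  simp only [PhiE, hterm, sum_add_distrib, sum_sub_distrib, hbalance, sub_add_cancel]
  simp only [dotProduct, Wmat, mulVec_diagonal, lapOf_mulVec_apply, mul_sum]

/-- `|a_ij| x i = a_ij x j` says `x i = sgn(a_ij) x j` on the edges and nothing off them. -/
lemma abs_mul_eq_of_PhiE_eq_zero (hsc : StronglyConnected A) {x : Fin n → ℝ}
    (h : PhiE A x = 0) (i j : Fin n) : |A i j| * x i = A i j * x j := by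
  have hnn : ∀ i j, 0 ≤ minorDet A i * |A i j| * (x i - Real.sign (A i j) * x j) ^ 2 :=
    fun i j => by have := minorDet_pos A hsc i; positivity
  have hij := (sum_eq_zero_iff_of_nonneg fun j _ => hnn i j).mp
    ((sum_eq_zero_iff_of_nonneg fun i _ => sum_nonneg fun j _ => hnn i j).mp h i (mem_univ i))
    j (mem_univ j)
  rcases mul_eq_zero.mp hij with h0 | h0
  · rcases mul_eq_zero.mp h0 with h1 | h1
    · exact absurd h1 (minorDet_pos A hsc i).ne'
    · simp [abs_eq_zero.mp h1]
  · rw [sub_eq_zero.mp (pow_eq_zero_iff two_ne_zero |>.mp h0), ← mul_assoc, Real.abs_mul_sign]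

lemma lapOf_mulVec_eq_zero {x : Fin n → ℝ} (h : ∀ i j, |A i j| * x i = A i j * x j) :
    lapOf A *ᵥ x = 0 :=
  funext fun i => by simp [lapOf_mulVec_apply, h]

lemma transpose_lapOf_mulVec_Wmat_mulVec_eq_zero (hsc : StronglyConnected A) {x : Fin n → ℝ}
    (h : ∀ i j, |A i j| * x i = A i j * x j) : (lapOf A)ᵀ *ᵥ (Wmat A *ᵥ x) = 0 := by
  funext j
  have hk : ∀ k, A k j * (minorDet A k * x k) = minorDet A k * |A k j| * x j := fun k => by
    rw [mul_left_comm, mul_assoc, abs_mul_eq_mul_swap (h k j)]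
  simp only [transpose_lapOf_mulVec_apply, Wmat, mulVec_diagonal]
  rw [sum_congr rfl fun k _ => hk k, ← sum_mul, sum_minorDet_mul_abs A hsc, Pi.zero_apply]
  ring

end lapOf

theorem mirrorLap_nullspace_eq_general (n : ℕ)
    (A : Matrix (Fin n) (Fin n) ℝ)
    (hsc : StronglyConnected A) :
    ∀ x : Fin n → ℝ, mirrorLap A *ᵥ x = 0 ↔ lapOf A *ᵥ x = 0 := by
  intro x
  suffices key : x ⬝ᵥ (Wmat A *ᵥ (lapOf A *ᵥ x)) = 0 →
      lapOf A *ᵥ x = 0 ∧ mirrorLap A *ᵥ x = 0 by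
    refine ⟨fun h => (key ?_).1, fun h => (key ?_).2⟩
    · rw [← dotProduct_mirrorLap_mulVec, h, dotProduct_zero]
    · rw [h, mulVec_zero, dotProduct_zero]
  intro hq
  have hedge := abs_mul_eq_of_PhiE_eq_zero A hsc (by rw [PhiE_eq A hsc, hq, mul_zero])
  have hL := lapOf_mulVec_eq_zero A hedge
  refine ⟨hL, ?_⟩
  rw [mirrorLap_mulVec, hL, transpose_lapOf_mulVec_Wmat_mulVec_eq_zero A hsc hedge]
  simp

/-- the null space of the mirror Laplacian `L̂` equals that of `L`. -/
theorem mirrorLap_nullspace_eq (n : ℕ) (hn : 2 ≤ n)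
    (A : Matrix (Fin n) (Fin n) ℝ)
    (hdiag : ∀ i, A i i = 0) (hdigon : ∀ i j, 0 ≤ A i j * A j i)
    (hsc : StronglyConnected A) :
    ∀ x : Fin n → ℝ, mirrorLap A *ᵥ x = 0 ↔ lapOf A *ᵥ x = 0 :=
  mirrorLap_nullspace_eq_general n A hsc
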